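/- Let T ≥ 1, R > 0, and let V be a finite nonempty collection of [−R, R]-valued trees of length T. Then for any η > 0 and α > 0, E_σ sup_{v∈V} Σ_{t=1}^T [ σ_t·(v_t(σ) − η·v_t(σ)²) − α·η·v_t(σ)² ] ≤ 2·log|V| · max(1/(αη), ηR²/α), where σ is uniform on {−1,+1}^T. -/

import Mathlib

noncomputable section

open Finset

/-- A `Z`-valued tree of length `T`: for each `t`, a map from sign prefixes of length `t−1`
(indices `0,…,t−1` in 0-based indexing) to `Z`. -/
def STree (Z : Type*) (T : ℕ) := (t : Fin T) → (Fin t.1 → Bool) → Z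

/-- Evaluation of a tree along a sign path. -/
def STree.eval {Z : Type*} {T : ℕ} (z : STree Z T) (t : Fin T) (σ : Fin T → Bool) : Z :=
  z t fun i => σ ⟨i.1, i.2.trans t.2⟩

/-- The real sign `±1` associated to a Boolean Rademacher variable. -/
def sgn {T : ℕ} (σ : Fin T → Bool) (t : Fin T) : ℝ := if σ t then 1 else -1

/-
For a single tree `v` and `λ = αη / (1 + η²R²)`, the process `exp (λ · Σ_{s ≤ t} offset_s)` is a
supermartingale along the sign path: conditionally on the past, the `t`-th increment is
`±w - c` with `w² ≤ 2c`, and `cosh w ≤ exp (w² / 2)`. Hence `E exp (λ · offsetSum) ≤ 1` for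
every `v ∈ V`, and the usual soft-max argument (Jensen, then `exp ∘ sup ≤ Σ exp`) gives
`E sup ≤ log |V| / λ = log |V| · (1/(αη) + ηR²/α)`.
-/

open Real

lemma exp_sub_add_exp_neg_sub_le_two {w c : ℝ} (h : w ^ 2 ≤ 2 * c) :
    exp (w - c) + exp (-w - c) ≤ 2 :=
  calc exp (w - c) + exp (-w - c) = 2 * cosh w * exp (-c) := by
        rw [cosh_eq]; simp only [sub_eq_add_neg, exp_add]; ring
    _ ≤ 2 * exp (w ^ 2 / 2) * exp (-c) := by gcongr; exact cosh_le_exp_half_sq w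
    _ = 2 * exp (w ^ 2 / 2 - c) := by rw [sub_eq_add_neg, exp_add]; ring
    _ ≤ 2 * exp 0 := by gcongr; linarith
    _ = 2 := by simp

theorem sum_sup'_div_card_le_log_card_div {Ω ι : Type*} [Fintype Ω] [Nonempty Ω]
    (V : Finset ι) (hV : V.Nonempty) (X : ι → Ω → ℝ) {l : ℝ} (hl : 0 < l)
    (hX : ∀ v ∈ V, ∑ ω, exp (l * X v ω) ≤ Fintype.card Ω) :
    (∑ ω, V.sup' hV (X · ω)) / Fintype.card Ω ≤ log V.card / l := by
  set N : ℝ := (Fintype.card Ω : ℝ)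
  have hN : 0 < N := by simp [N, Fintype.card_pos]
  have jensen : exp (l * ((∑ ω, V.sup' hV (X · ω)) / N))
      ≤ ∑ ω, N⁻¹ * exp (l * V.sup' hV (X · ω)) := by
    have := convexOn_exp.map_sum_le (t := univ) (w := fun _ => N⁻¹)
      (p := fun ω => l * V.sup' hV (X · ω)) (fun _ _ => by positivity)
      (by simp [N, hN.ne']) (fun _ _ => Set.mem_univ _)
    simpa only [smul_eq_mul, ← mul_sum, div_eq_inv_mul, mul_left_comm N⁻¹] using this
  have exp_sup_le (ω : Ω) : exp (l * V.sup' hV (X · ω)) ≤ ∑ v ∈ V, exp (l * X v ω) := by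
    obtain ⟨v, hv, hsup⟩ := exists_mem_eq_sup' hV (X · ω)
    rw [hsup]
    exact single_le_sum (f := fun v => exp (l * X v ω)) (fun _ _ => (exp_pos _).le) hv
  have hexp : exp (l * ((∑ ω, V.sup' hV (X · ω)) / N)) ≤ V.card :=
    calc exp (l * ((∑ ω, V.sup' hV (X · ω)) / N))
        ≤ N⁻¹ * ∑ v ∈ V, ∑ ω, exp (l * X v ω) := by
          rw [sum_comm, mul_sum]
          exact jensen.trans (sum_le_sum fun ω _ => by gcongr; exact exp_sup_le ω)
      _ ≤ N⁻¹ * ∑ _v ∈ V, N := by gcongr with v hv; exact hX v hv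
      _ = V.card := by rw [sum_const, nsmul_eq_mul]; field_simp
  rw [le_div_iff₀' hl]
  exact (le_log_iff_exp_le (by simpa using hV.card_pos)).mpr hexp

lemma sq_sub_mul_sq_le {x R : ℝ} (η : ℝ) (hx : |x| ≤ R) :
    (x - η * x ^ 2) ^ 2 ≤ 2 * x ^ 2 * (1 + η ^ 2 * R ^ 2) := by
  have hx2 : x ^ 2 ≤ R ^ 2 := by simpa only [sq_abs] using pow_le_pow_left₀ (abs_nonneg x) hx 2
  nlinarith [sq_nonneg (x + η * x ^ 2), mul_le_mul_of_nonneg_left hx2 (sq_nonneg (η * x))]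

section SignPaths

variable {T : ℕ}

def flipAt (e : Fin T) (σ : Fin T → Bool) : Fin T → Bool := Function.update σ e (!σ e)

lemma flipAt_involutive (e : Fin T) : Function.Involutive (flipAt e) := by
  intro σ
  funext i
  by_cases h : i = e <;> simp [flipAt, Function.update_apply, h]

lemma flipAt_apply_of_ne {e t : Fin T} (h : t ≠ e) (σ : Fin T → Bool) : flipAt e σ t = σ t :=
  Function.update_of_ne h _ _

lemma sgn_sq (σ : Fin T → Bool) (t : Fin T) : sgn σ t ^ 2 = 1 := by
  unfold sgn; split <;> norm_num

lemma sgn_flipAt_of_ne {e t : Fin T} (h : t ≠ e) (σ : Fin T → Bool) :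
    sgn (flipAt e σ) t = sgn σ t := by
  simp only [sgn, flipAt_apply_of_ne h]

lemma sgn_flipAt_self (e : Fin T) (σ : Fin T → Bool) : sgn (flipAt e σ) e = -sgn σ e := by
  cases h : σ e <;> simp [sgn, flipAt, h]

lemma STree.eval_flipAt_of_le {Z : Type*} (z : STree Z T) {e t : Fin T} (h : t ≤ e)
    (σ : Fin T → Bool) : z.eval t (flipAt e σ) = z.eval t σ := by
  unfold STree.eval
  congr 1
  funext i
  exact flipAt_apply_of_ne (Fin.ne_of_lt (lt_of_lt_of_le (Fin.mk_lt_mk.mpr i.2) h)) σ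

lemma sum_exp_sgn_mul_sub_add_le (e : Fin T) {A C P : (Fin T → Bool) → ℝ}
    (hA : ∀ σ, A (flipAt e σ) = A σ) (hC : ∀ σ, C (flipAt e σ) = C σ)
    (hP : ∀ σ, P (flipAt e σ) = P σ) (hAC : ∀ σ, A σ ^ 2 ≤ 2 * C σ) :
    ∑ σ, exp (sgn σ e * A σ - C σ + P σ) ≤ ∑ σ, exp (P σ) := by
  set F : (Fin T → Bool) → ℝ := fun σ => exp (sgn σ e * A σ - C σ + P σ)
  have hflip : ∑ σ, F (flipAt e σ) = ∑ σ, F σ := Equiv.sum_comp (flipAt_involutive e).toPerm F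
  have hpair : ∀ σ, F σ + F (flipAt e σ) ≤ 2 * exp (P σ) := by
    intro σ
    have hsq : (sgn σ e * A σ) ^ 2 ≤ 2 * C σ := by rw [mul_pow, sgn_sq, one_mul]; exact hAC σ
    calc F σ + F (flipAt e σ)
        = (exp (sgn σ e * A σ - C σ) + exp (-(sgn σ e * A σ) - C σ)) * exp (P σ) := by
          simp only [F, sgn_flipAt_self, hA, hC, hP, exp_add, neg_mul]; ring
      _ ≤ 2 * exp (P σ) := by gcongr; exact exp_sub_add_exp_neg_sub_le_two hsq
  have := sum_le_sum fun σ (_ : σ ∈ univ) => hpair σ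
  rw [sum_add_distrib, hflip, ← mul_sum] at this
  linarith

theorem sum_exp_sum_sgn_mul_sub_le (a c : STree ℝ T) (hac : ∀ t b, a t b ^ 2 ≤ 2 * c t b) :
    ∑ σ : Fin T → Bool, exp (∑ t, (sgn σ t * a.eval t σ - c.eval t σ)) ≤ 2 ^ T := by
  set X : Fin T → (Fin T → Bool) → ℝ := fun t σ => sgn σ t * a.eval t σ - c.eval t σ
  have step (n : ℕ) (hn : n < T) :
      ∑ σ, exp (∑ t with t.1 < n + 1, X t σ) ≤ ∑ σ, exp (∑ t with t.1 < n, X t σ) := by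
    set e : Fin T := ⟨n, hn⟩
    have hinsert :
        univ.filter (fun t : Fin T => t.1 < n + 1) = insert e (univ.filter (·.1 < n)) := by
      ext t; simp only [mem_filter, mem_univ, true_and, mem_insert, Fin.ext_iff, e]; omega
    simp only [hinsert, sum_insert (by simp [e] : e ∉ univ.filter (fun t : Fin T => t.1 < n))]
    refine sum_exp_sgn_mul_sub_add_le e (a.eval_flipAt_of_le le_rfl) (c.eval_flipAt_of_le le_rfl)
      (fun σ => sum_congr rfl fun t ht => ?_) fun σ => hac e _
    have hte : t < e := Fin.mk_lt_mk.mpr (mem_filter.mp ht).2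
    simp only [X, sgn_flipAt_of_ne hte.ne, a.eval_flipAt_of_le hte.le,
      c.eval_flipAt_of_le hte.le]
  have partial_le (n : ℕ) (hn : n ≤ T) : ∑ σ, exp (∑ t with t.1 < n, X t σ) ≤ 2 ^ T := by
    induction n with
    | zero => simp
    | succ n ih => exact (step n hn).trans (ih (Nat.le_of_succ_le hn))
  simpa only [filter_true_of_mem fun (t : Fin T) _ => t.2] using partial_le T le_rfl

def offsetSum (η α : ℝ) (v : STree ℝ T) (σ : Fin T → Bool) : ℝ :=
  ∑ t, (sgn σ t * (v.eval t σ - η * (v.eval t σ) ^ 2) - α * η * (v.eval t σ) ^ 2)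

lemma sum_exp_mul_offsetSum_le {η α R l : ℝ} (hl : l * (1 + η ^ 2 * R ^ 2) = α * η)
    (v : STree ℝ T) (hv : ∀ t b, |v t b| ≤ R) :
    ∑ σ, exp (l * offsetSum η α v σ) ≤ 2 ^ T := by
  have hac (t : Fin T) (b : Fin t.1 → Bool) :
      (l * (v t b - η * v t b ^ 2)) ^ 2 ≤ 2 * (l * (α * η * v t b ^ 2)) :=
    calc (l * (v t b - η * v t b ^ 2)) ^ 2
        ≤ l ^ 2 * (2 * v t b ^ 2 * (1 + η ^ 2 * R ^ 2)) := by
          rw [mul_pow]; gcongr; exact sq_sub_mul_sq_le η (hv t b)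
      _ = 2 * (l * (α * η * v t b ^ 2)) := by rw [← hl]; ring
  convert sum_exp_sum_sgn_mul_sub_le _ _ hac using 3 with σ
  rw [offsetSum, mul_sum]
  exact sum_congr rfl fun t _ => by simp only [STree.eval]; ring

end SignPaths

theorem stmt10_general (T : ℕ) (R : ℝ)
    (V : Finset (STree ℝ T)) (hV : V.Nonempty)
    (hrange : ∀ v ∈ V, ∀ (t : Fin T) (b : Fin t.1 → Bool), |v t b| ≤ R)
    (η α : ℝ) (hη : 0 < η) (hα : 0 < α) :
    (∑ σ : Fin T → Bool, V.sup' hV fun v =>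
        ∑ t, (sgn σ t * (v.eval t σ - η * (v.eval t σ) ^ 2) - α * η * (v.eval t σ) ^ 2))
        / 2 ^ T
      ≤ 2 * Real.log V.card * max (1 / (α * η)) (η * R ^ 2 / α) := by
  set l : ℝ := α * η / (1 + η ^ 2 * R ^ 2)
  have hl : l * (1 + η ^ 2 * R ^ 2) = α * η := div_mul_cancel₀ _ (by positivity)
  have hcard : (Fintype.card (Fin T → Bool) : ℝ) = 2 ^ T := by simp
  have hmax := sum_sup'_div_card_le_log_card_div V hV (offsetSum η α) (l := l) (by positivity)
    fun v hv => hcard ▸ sum_exp_mul_offsetSum_le hl v (hrange v hv)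
  have hlog : 0 ≤ log V.card := log_natCast_nonneg _
  calc _ ≤ log V.card / l := hcard ▸ hmax
    _ = log V.card * (1 / (α * η) + η * R ^ 2 / α) := by simp only [l]; field_simp
    _ ≤ log V.card * (2 * max (1 / (α * η)) (η * R ^ 2 / α)) := by
        gcongr; linarith [le_max_left (1 / (α * η)) (η * R ^ 2 / α),
          le_max_right (1 / (α * η)) (η * R ^ 2 / α)]
    _ = _ := by ring

/-- Freedman-type offset Rademacher inequality for a finite collection of
`[−R,R]`-valued trees. -/
theorem stmt10 (T : ℕ) (hT : 1 ≤ T) (R : ℝ) (hR : 0 < R)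
    (V : Finset (STree ℝ T)) (hV : V.Nonempty)
    (hrange : ∀ v ∈ V, ∀ (t : Fin T) (b : Fin t.1 → Bool), |v t b| ≤ R)
    (η α : ℝ) (hη : 0 < η) (hα : 0 < α) :
    (∑ σ : Fin T → Bool, V.sup' hV fun v =>
        ∑ t, (sgn σ t * (v.eval t σ - η * (v.eval t σ) ^ 2) - α * η * (v.eval t σ) ^ 2))
        / 2 ^ T
      ≤ 2 * Real.log V.card * max (1 / (α * η)) (η * R ^ 2 / α) :=
  stmt10_general T R V hV hrange η α hη hα
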